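/- arXiv:1410.2364 — 2 statements merged into one kernel-verified Lean document; each statement's English description precedes it below -/
import Mathlib

section
/- Let a > 0, b ∈ ℝ, σ > 0, γ > 1, and define F(x) = ½(x^{-1/2} - x^{-1})(2a - bx - (γσ²/2)x^{2γ-1}) + (σ²/4)(-½x^{-3/2} + x^{-2})x^{2γ} for x > 0. Then F is bounded above on (0,∞), i.e., there exists K such that F(x) ≤ K for all x > 0. -/
/-!
Substituting `x = q ^ 2` turns `F` into
`a (q - 1) / q ^ 2 - (b / 2) (q - 1) + q ^ (4γ - 4) ((γ + 1) σ² / 4 - (2γ + 1) σ² q / 8)`.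
The first term is at most `a / 4`, and since `4γ - 4 > 0` the factor `q ^ (4γ - 4)` makes the
last term, whose bracket is eventually negative, beat the linear term `-(b / 2) q` for large `q`.
-/

open Real

noncomputable def F (a b σ γ x : ℝ) : ℝ :=
  (1 / 2) * (x ^ (-(1 : ℝ) / 2) - x ^ (-1 : ℝ)) *
      (2 * a - b * x - (γ * σ ^ 2 / 2) * x ^ (2 * γ - 1)) +
    (σ ^ 2 / 4) * (-(1 / 2) * x ^ (-(3 : ℝ) / 2) + x ^ (-2 : ℝ)) * x ^ (2 * γ)

lemma sq_rpow {q : ℝ} (hq : 0 ≤ q) (r : ℝ) : (q ^ 2) ^ r = q ^ (2 * r) := by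
  rw [← rpow_natCast_mul hq]; norm_num

lemma F_sq {q : ℝ} (hq : 0 < q) (a b σ γ : ℝ) :
    F a b σ γ (q ^ 2) = a * ((q - 1) / q ^ 2) - b / 2 * (q - 1) +
      q ^ (4 * γ - 4) * ((γ + 1) * σ ^ 2 / 4 - (2 * γ + 1) * σ ^ 2 / 8 * q) := by
  have split : ∀ n : ℕ, q ^ (4 * γ - 4 + n) = q ^ (4 * γ - 4) * q ^ n := fun n => by
    rw [rpow_add hq, rpow_natCast]
  have h2 : q ^ (4 * γ - 2) = q ^ (4 * γ - 4) * q ^ 2 := by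
    rw [← split]; norm_num; ring_nf
  have h4 : q ^ (4 * γ) = q ^ (4 * γ - 4) * q ^ 4 := by
    rw [← split]; norm_num
  have hneg : ∀ n : ℕ, q ^ (-(n : ℝ)) = (q ^ n)⁻¹ := fun n => by
    rw [rpow_neg hq.le, rpow_natCast]
  unfold F
  simp only [sq_rpow hq.le]
  rw [show 2 * (-(1 : ℝ) / 2) = -((1 : ℕ) : ℝ) by norm_num,
    show 2 * (-1 : ℝ) = -((2 : ℕ) : ℝ) by norm_num,
    show 2 * (-(3 : ℝ) / 2) = -((3 : ℕ) : ℝ) by norm_num,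
    show 2 * (-2 : ℝ) = -((4 : ℕ) : ℝ) by norm_num,
    show 2 * (2 * γ - 1) = 4 * γ - 2 by ring, show 2 * (2 * γ) = 4 * γ by ring, h2, h4]
  simp only [hneg]
  field_simp
  ring

lemma sub_one_div_sq_le_quarter (q : ℝ) : (q - 1) / q ^ 2 ≤ 1 / 4 := by
  rcases eq_or_ne q 0 with rfl | hq
  · norm_num
  rw [div_le_div_iff₀ (by positivity) (by norm_num)]
  nlinarith [sq_nonneg (q - 2)]

lemma exists_forall_mul_add_rpow_mul_sub_le (c B : ℝ) {A p : ℝ} (hA : 0 < A) (hp : 0 < p) :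
    ∃ K, ∀ q, 0 < q → c * q + q ^ p * (B - A * q) ≤ K := by
  set R := (2 * |c| / A) ^ p⁻¹
  have hR : 0 ≤ R := by positivity
  set Q := max (2 * B / A) R
  refine ⟨|c| * Q + Q ^ p * |B|, fun q hq => ?_⟩
  have hK : 0 ≤ |c| * Q + Q ^ p * |B| := by
    have : 0 ≤ Q := hR.trans (le_max_right _ _)
    positivity
  have hqp : 0 ≤ q ^ p := by positivity
  rcases le_or_gt q Q with hqQ | hQq
  · have hlin : c * q ≤ |c| * Q := by
      nlinarith [neg_abs_le c, le_abs_self c, abs_nonneg c]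
    have hpow : q ^ p * (B - A * q) ≤ Q ^ p * |B| :=
      calc q ^ p * (B - A * q) ≤ q ^ p * |B| := by
            gcongr; linarith [le_abs_self B, mul_pos hA hq]
        _ ≤ Q ^ p * |B| := by gcongr
    linarith
  · -- beyond `Q`, `A * q` dominates `2 * B` and `q ^ p` dominates `2 * |c| / A`
    have hB : B - A * q ≤ -(A * q / 2) := by
      have := (le_max_left _ _).trans_lt hQq
      rw [div_lt_iff₀ hA] at this; linarith
    have hc : 2 * |c| / A ≤ q ^ p := by
      calc 2 * |c| / A = R ^ p := (rpow_inv_rpow (by positivity) hp.ne').symm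
        _ ≤ q ^ p := by gcongr; exact (le_max_right _ _).trans hQq.le
    rw [div_le_iff₀ hA] at hc
    nlinarith [le_abs_self c, mul_le_mul_of_nonneg_left hB hqp]

theorem stmt_4 (a b σ γ : ℝ) (ha : 0 < a) (hσ : 0 < σ) (hγ : 1 < γ) :
    ∃ K : ℝ, ∀ x : ℝ, 0 < x →
      (1 / 2) * (x ^ (-(1 : ℝ) / 2) - x ^ (-1 : ℝ)) *
          (2 * a - b * x - (γ * σ ^ 2 / 2) * x ^ (2 * γ - 1)) +
        (σ ^ 2 / 4) * (-(1 / 2) * x ^ (-(3 : ℝ) / 2) + x ^ (-2 : ℝ)) * x ^ (2 * γ) ≤ K := by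
  obtain ⟨K, hK⟩ := exists_forall_mul_add_rpow_mul_sub_le (-(b / 2)) ((γ + 1) * σ ^ 2 / 4)
    (A := (2 * γ + 1) * σ ^ 2 / 8) (p := 4 * γ - 4) (by positivity) (by linarith)
  refine ⟨a / 4 + b / 2 + K, fun x hx => ?_⟩
  obtain ⟨q, hq, rfl⟩ : ∃ q, 0 < q ∧ q ^ 2 = x := ⟨√x, sqrt_pos.2 hx, sq_sqrt hx.le⟩
  change F a b σ γ (q ^ 2) ≤ _
  have ha_term : a * ((q - 1) / q ^ 2) ≤ a / 4 := by
    linarith [mul_le_mul_of_nonneg_left (sub_one_div_sq_le_quarter q) ha.le]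
  rw [F_sq hq]
  linarith [hK q hq]
end

section
/- Let σ > 0, b > 0, and ½ ≤ γ < 1 with γ/σ ≥ 1. Define the scale density integrand h(y) = y^{-γ/σ} · exp( b/(σ²(1-γ)) · y^{2(1-γ)} ) for y > 0, and p(x) = e^{-b/(σ²(1-γ))} ∫₁ˣ h(y) dy. Then lim_{x→0⁺} p(x) = -∞ and lim_{x→∞} p(x) = +∞. -/
/-!
Write `h y = y ^ (-a) * exp (c * y ^ β)` with `a = γ / σ ≥ 1`, `c = b / (σ² (1 - γ)) > 0`
and `β = 2 (1 - γ) > 0`. On `(0, 1]` the integrand dominates `y⁻¹`, so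
`∫ₓ¹ h ≥ -log x → ∞` as `x → 0⁺`. At infinity the exponential beats the power, so `h ≥ 1`
eventually and `∫₁ˣ h` grows at least linearly. The positive factor `exp (-c)` does not
affect either limit.
-/

open Filter Set MeasureTheory Real Topology

theorem tendsto_intervalIntegral_atTop_of_eventually_le {f : ℝ → ℝ} {a ε : ℝ}
    (hε : 0 < ε) (hf : ∀ x ≥ a, IntervalIntegrable f volume a x) (hle : ∀ᶠ y in atTop, ε ≤ f y) :
    Tendsto (fun x => ∫ y in a..x, f y) atTop atTop := by
  obtain ⟨Y, hY⟩ := (hle.and (eventually_ge_atTop a)).exists_forall_of_atTop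
  have haY : a ≤ Y := (hY Y le_rfl).2
  have hlin : Tendsto (fun x => (∫ y in a..Y, f y) + ε * (x - Y)) atTop atTop :=
    tendsto_atTop_add_const_left _ _
      ((tendsto_atTop_add_const_right _ (-Y) tendsto_id).const_mul_atTop hε)
  refine tendsto_atTop_mono' _ ?_ hlin
  filter_upwards [eventually_ge_atTop Y] with x hYx
  have hYx_int : IntervalIntegrable f volume Y x := (hf Y haY).symm.trans (hf x (haY.trans hYx))
  have htail : ε * (x - Y) ≤ ∫ y in Y..x, f y := by
    simpa [mul_comm] using intervalIntegral.integral_mono_on hYx intervalIntegrable_const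
      hYx_int fun y hy => (hY y hy.1).1
  rw [← intervalIntegral.integral_add_adjacent_intervals (hf Y haY) hYx_int]
  linarith

theorem tendsto_intervalIntegral_one_nhdsGT_zero_atBot {f : ℝ → ℝ}
    (hf : ∀ x ∈ Ioo (0 : ℝ) 1, IntervalIntegrable f volume x 1)
    (hle : ∀ y ∈ Ioc (0 : ℝ) 1, y⁻¹ ≤ f y) :
    Tendsto (fun x => ∫ y in (1 : ℝ)..x, f y) (𝓝[>] 0) atBot := by
  refine tendsto_atBot_mono' _ ?_ tendsto_log_nhdsGT_zero
  filter_upwards [Ioo_mem_nhdsGT (zero_lt_one' ℝ)] with x hx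
  have hinv : ∫ y in x..1, y⁻¹ ≤ ∫ y in x..1, f y :=
    intervalIntegral.integral_mono_on hx.2.le
      (intervalIntegral.intervalIntegrable_inv (fun y hy => by
        rw [uIcc_of_le hx.2.le] at hy; exact (hx.1.trans_le hy.1).ne') continuousOn_id)
      (hf x hx) fun y hy => hle y ⟨hx.1.trans_le hy.1, hy.2⟩
  rw [integral_inv_of_pos hx.1 one_pos, one_div, log_inv] at hinv
  rw [intervalIntegral.integral_symm]
  linarith

section ScaleIntegrand

variable (a c β : ℝ)

theorem continuousOn_rpow_neg_mul_exp :
    ContinuousOn (fun y : ℝ => y ^ (-a) * exp (c * y ^ β)) (Ioi 0) := fun y hy =>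
  ((continuousAt_rpow_const y (-a) (Or.inl (ne_of_gt hy))).mul
    (continuous_exp.continuousAt.comp (continuousAt_const.mul
      (continuousAt_rpow_const y β (Or.inl (ne_of_gt hy)))))).continuousWithinAt

theorem intervalIntegrable_rpow_neg_mul_exp {u v : ℝ} (hu : 0 < u) (hv : 0 < v) :
    IntervalIntegrable (fun y : ℝ => y ^ (-a) * exp (c * y ^ β)) volume u v :=
  ((continuousOn_rpow_neg_mul_exp a c β).mono fun _ hy => (lt_min hu hv).trans_le hy.1
    ).intervalIntegrable

variable {a c β}

theorem inv_le_rpow_neg_mul_exp (ha : 1 ≤ a) (hc : 0 ≤ c) {y : ℝ}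
    (hy : y ∈ Ioc (0 : ℝ) 1) :
    y⁻¹ ≤ y ^ (-a) * exp (c * y ^ β) :=
  calc y⁻¹ = y ^ (-1 : ℝ) := (rpow_neg_one y).symm
    _ ≤ y ^ (-a) := rpow_le_rpow_of_exponent_ge hy.1 hy.2 (by linarith)
    _ ≤ y ^ (-a) * exp (c * y ^ β) :=
      le_mul_of_one_le_right (rpow_nonneg hy.1.le _)
        (one_le_exp (mul_nonneg hc (rpow_nonneg hy.1.le _)))

theorem tendsto_rpow_neg_mul_exp_atTop (hc : 0 < c) (hβ : 0 < β) :
    Tendsto (fun y : ℝ => y ^ (-a) * exp (c * y ^ β)) atTop atTop := by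
  refine ((tendsto_exp_mul_div_rpow_atTop (a / β) c hc).comp (tendsto_rpow_atTop hβ)).congr' ?_
  filter_upwards [eventually_gt_atTop 0] with y hy
  rw [Function.comp_apply, ← rpow_mul hy.le, mul_div_cancel₀ a hβ.ne', rpow_neg hy.le,
    div_eq_inv_mul]

end ScaleIntegrand

theorem stmt_8_general (σ b γ : ℝ) (hσ : 0 < σ) (hb : 0 < b)
    (hγ₂ : γ < 1) (hγσ : 1 ≤ γ / σ) :
    Filter.Tendsto
      (fun x : ℝ => Real.exp (-(b / (σ ^ 2 * (1 - γ)))) *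
        ∫ y in (1 : ℝ)..x,
          y ^ (-(γ / σ)) * Real.exp (b / (σ ^ 2 * (1 - γ)) * y ^ (2 * (1 - γ))))
      (nhdsWithin 0 (Set.Ioi 0)) Filter.atBot ∧
    Filter.Tendsto
      (fun x : ℝ => Real.exp (-(b / (σ ^ 2 * (1 - γ)))) *
        ∫ y in (1 : ℝ)..x,
          y ^ (-(γ / σ)) * Real.exp (b / (σ ^ 2 * (1 - γ)) * y ^ (2 * (1 - γ))))
      Filter.atTop Filter.atTop := by
  have hc : 0 < b / (σ ^ 2 * (1 - γ)) := by
    have : 0 < 1 - γ := by linarith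
    positivity
  have hβ : 0 < 2 * (1 - γ) := by linarith
  constructor
  · exact (tendsto_intervalIntegral_one_nhdsGT_zero_atBot
      (fun x hx => intervalIntegrable_rpow_neg_mul_exp _ _ _ hx.1 one_pos)
      (fun y hy => inv_le_rpow_neg_mul_exp hγσ hc.le hy)).const_mul_atBot (exp_pos _)
  · exact (tendsto_intervalIntegral_atTop_of_eventually_le one_pos
      (fun x hx => intervalIntegrable_rpow_neg_mul_exp _ _ _ one_pos (one_pos.trans_le hx))
      ((tendsto_rpow_neg_mul_exp_atTop hc hβ).eventually_ge_atTop 1)).const_mul_atTop (exp_pos _)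

theorem stmt_8 (σ b γ : ℝ) (hσ : 0 < σ) (hb : 0 < b)
    (hγ₁ : 1 / 2 ≤ γ) (hγ₂ : γ < 1) (hγσ : 1 ≤ γ / σ) :
    Filter.Tendsto
      (fun x : ℝ => Real.exp (-(b / (σ ^ 2 * (1 - γ)))) *
        ∫ y in (1 : ℝ)..x,
          y ^ (-(γ / σ)) * Real.exp (b / (σ ^ 2 * (1 - γ)) * y ^ (2 * (1 - γ))))
      (nhdsWithin 0 (Set.Ioi 0)) Filter.atBot ∧
    Filter.Tendsto
      (fun x : ℝ => Real.exp (-(b / (σ ^ 2 * (1 - γ)))) *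
        ∫ y in (1 : ℝ)..x,
          y ^ (-(γ / σ)) * Real.exp (b / (σ ^ 2 * (1 - γ)) * y ^ (2 * (1 - γ))))
      Filter.atTop Filter.atTop :=
  stmt_8_general σ b γ hσ hb hγ₂ hγσ
end
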